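/- For all integers k ≥ 1 and n ≥ 1: (i) every k-piecewise testable language over an alphabet of n letters is recognized by a minimal DFA of depth at most C(k+n, k) − 1; and (ii) there exists a k-piecewise testable language over an alphabet of n letters whose minimal DFA has depth exactly C(k+n, k) − 1. -/

import Mathlib

/-- `subk k w` is the set of scattered subwords of `w` of length at most `k`. -/
def subk {α : Type*} (k : ℕ) (w : List α) : Set (List α) :=
  {u | u.length ≤ k ∧ u.Sublist w}

/-- Two words are `k`-equivalent if they have the same subwords of length at most `k`. -/
def kEquiv {α : Type*} (k : ℕ) (u v : List α) : Prop :=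
  subk k u = subk k v

/-- A language is `k`-piecewise testable (Simon's characterization):
`k`-equivalent words are equi-members. -/
def IsPT {α : Type*} (k : ℕ) (L : Language α) : Prop :=
  ∀ u v : List α, kEquiv k u v → (u ∈ L ↔ v ∈ L)

/-- A DFA is minimal if all states are reachable and pairwise distinguishable. -/
def IsMinimalDFA {α σ : Type*} (A : DFA α σ) : Prop :=
  (∀ q : σ, ∃ w : List α, A.eval w = q) ∧
  ∀ p q : σ,
    (∀ w : List α, (A.evalFrom p w ∈ A.accept ↔ A.evalFrom q w ∈ A.accept)) → p = q

/-- There is a simple path (pairwise distinct states) with `m` transitions in the DFA `A`. -/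
def DFAHasSimplePath {α σ : Type*} (A : DFA α σ) (m : ℕ) : Prop :=
  ∃ (qs : Fin (m + 1) → σ) (as : Fin m → α),
    Function.Injective qs ∧ ∀ i : Fin m, A.step (qs i.castSucc) (as i) = qs i.succ

/-- The depth of a DFA: the number of transitions on a longest simple path. -/
noncomputable def dfaDepth {α σ : Type*} (A : DFA α σ) : ℕ :=
  sSup {m | DFAHasSimplePath A m}

/-- There is a simple path (pairwise distinct states) with `m` transitions in the NFA `A`. -/
def NFAHasSimplePath {α σ : Type*} (A : NFA α σ) (m : ℕ) : Prop :=
  ∃ (qs : Fin (m + 1) → σ) (as : Fin m → α),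
    Function.Injective qs ∧ ∀ i : Fin m, qs i.succ ∈ A.step (qs i.castSucc) (as i)

/-- The depth of an NFA: the number of transitions on a longest simple path. -/
noncomputable def nfaDepth {α σ : Type*} (A : NFA α σ) : ℕ :=
  sSup {m | NFAHasSimplePath A m}

/-
Upper bound: in the minimal DFA of a `k`-PT language, `k`-equivalent words lead to the same
state. Reading a simple path after a word that reaches its first state therefore enlarges the set
of `k`-subwords at every step, and along any word over `n` letters this set grows at most
`C(k + n, k) - 1` times.

Lower bound: over the letters `0, …, n - 1` let `L(k, n)` test a word by looking for the largest
letter `n - 1`: if it occurs, the rest of the word after its first occurrence is tested for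
`L(k - 1, n)`, otherwise the word is tested for `L(k, n - 1)`. This language is `k`-PT, and the
prefixes of `W(k, n) = W(k, n - 1) (n - 1) W(k - 1, n)`, a word of length `C(k + n, k) - 1`, are
pairwise Nerode-inequivalent, so `W(k, n)` labels a simple path of its minimal DFA.
-/

open List

section Development

variable {α : Type*}

section Subwords

theorem subk_zero (w : List α) : subk 0 w = {[]} := by
  ext u
  simp only [subk, Set.mem_ofPred_eq, Set.mem_singleton_iff, Nat.le_zero, length_eq_zero_iff]
  exact ⟨And.left, fun h => ⟨h, h ▸ nil_sublist w⟩⟩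

theorem subk_append_right_subset {k : ℕ} {u v : List α} (h : subk k u ⊆ subk k v)
    (x : List α) : subk k (u ++ x) ⊆ subk k (v ++ x) := by
  rintro w ⟨hlen, hw⟩
  obtain ⟨w₁, w₂, rfl, h₁, h₂⟩ := sublist_append_iff.1 hw
  have hw₁ : w₁ <+ v := (h ⟨by rw [length_append] at hlen; omega, h₁⟩).2
  exact ⟨hlen, hw₁.append h₂⟩

theorem kEquiv_append {k : ℕ} {u v : List α} (h : kEquiv k u v) (x : List α) :
    kEquiv k (u ++ x) (v ++ x) :=
  (subk_append_right_subset h.le x).antisymm (subk_append_right_subset h.ge x)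

/-- A subword of `p ++ q` with all its `k + 1` letters in `q` can take its first letter from `p`
instead. -/
theorem subk_succ_append_left_subset {k : ℕ} {p q q' : List α} (hq : ∀ b ∈ q, b ∈ p)
    (h : subk k q ⊆ subk k q') : subk (k + 1) (p ++ q) ⊆ subk (k + 1) (p ++ q') := by
  rintro w ⟨hlen, hw⟩
  obtain ⟨w₁, w₂, rfl, h₁, h₂⟩ := sublist_append_iff.1 hw
  by_cases hw₂ : w₂.length ≤ k
  · exact ⟨hlen, h₁.append (h ⟨hw₂, h₂⟩).2⟩
  have hlen' : w₁.length + w₂.length ≤ k + 1 := length_append ▸ hlen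
  obtain rfl : w₁ = [] := length_eq_zero_iff.1 (by omega)
  obtain _ | ⟨a, w₂⟩ := w₂
  · simp at hw₂
  have hap : [a] <+ p := singleton_sublist.2 (hq a (h₂.subset mem_cons_self))
  have hw₂' : w₂ <+ q' :=
    (h ⟨by rw [length_nil, length_cons] at hlen'; omega, (sublist_cons_self a _).trans h₂⟩).2
  exact ⟨hlen, hap.append hw₂'⟩

theorem subk_succ_append_left_congr {k : ℕ} {p q q' : List α} (hq : ∀ b ∈ q, b ∈ p)
    (hq' : ∀ b ∈ q', b ∈ p) (h : subk k q = subk k q') :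
    subk (k + 1) (p ++ q) = subk (k + 1) (p ++ q') :=
  (subk_succ_append_left_subset hq h.le).antisymm (subk_succ_append_left_subset hq' h.ge)

theorem kEquiv_mem {k : ℕ} (hk : 1 ≤ k) {u v : List α} (h : kEquiv k u v) (c : α) :
    c ∈ u ↔ c ∈ v := by
  have hc : ∀ w, [c] ∈ subk k w ↔ c ∈ w := fun w => by simp [subk, hk]
  rw [← hc, ← hc, h]

theorem kEquiv_map {β : Type*} (f : α → β) {k : ℕ} {u v : List α} (h : kEquiv k u v) :
    kEquiv k (u.map f) (v.map f) := by
  have key : ∀ {p q : List α}, kEquiv k p q → subk k (p.map f) ⊆ subk k (q.map f) := by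
    intro p q hpq w ⟨hlen, hw⟩
    obtain ⟨w', hw', rfl⟩ := sublist_map_iff.1 hw
    have : w' ∈ subk k q := hpq ▸ ⟨by simpa using hlen, hw'⟩
    exact ⟨hlen, this.2.map f⟩
  exact (key h).antisymm (key h.symm)

theorem sublist_of_cons_sublist_append_cons {a : α} {w y z : List α} (h : a :: w <+ y ++ a :: z)
    (hy : a ∉ y) : w <+ z := by
  induction y with
  | nil => exact cons_sublist_cons.1 h
  | cons b y ih =>
    rw [mem_cons, not_or] at hy
    rcases sublist_cons_iff.1 h with h | ⟨r, hr, -⟩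
    · exact ih h hy.2
    · exact absurd (cons_eq_cons.1 hr).1 hy.1

theorem prefix_append_cons_cases {a : α} {u l₁ l₂ : List α} (h : u <+: l₁ ++ a :: l₂) :
    u <+: l₁ ∨ ∃ t, t <+: l₂ ∧ u = l₁ ++ a :: t := by
  obtain ⟨s, hs⟩ := h
  rcases append_eq_append_iff.1 hs with ⟨c, rfl, -⟩ | ⟨c, rfl, hc⟩
  · exact Or.inl (prefix_append _ _)
  · rcases c with _ | ⟨b, t⟩
    · exact Or.inl (by simp)
    · obtain ⟨rfl, rfl⟩ := cons_eq_cons.1 hc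
      exact Or.inr ⟨t, prefix_append _ _, rfl⟩

section TailAfter

variable [DecidableEq α]

def tailAfter (a : α) : List α → List α
  | [] => []
  | b :: u => if b = a then u else tailAfter a u

theorem tailAfter_append_cons_of_not_mem {a : α} {x : List α} (h : a ∉ x) (y : List α) :
    tailAfter a (x ++ a :: y) = y := by
  induction x with
  | nil => simp [tailAfter]
  | cons b x ih =>
    rw [mem_cons, not_or] at h
    simp [tailAfter, Ne.symm h.1, ih h.2]

theorem tailAfter_append_of_mem {a : α} {u : List α} (h : a ∈ u) (v : List α) :
    tailAfter a (u ++ v) = tailAfter a u ++ v := by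
  induction u with
  | nil => simp at h
  | cons b u ih =>
    by_cases hb : b = a
    · simp [tailAfter, hb]
    · simp [tailAfter, hb, ih ((mem_cons.1 h).resolve_left (Ne.symm hb))]

theorem exists_eq_append_cons_tailAfter {a : α} {u : List α} (h : a ∈ u) :
    ∃ x, a ∉ x ∧ u = x ++ a :: tailAfter a u := by
  induction u with
  | nil => simp at h
  | cons b u ih =>
    by_cases hb : b = a
    · exact ⟨[], by simp, by simp [tailAfter, hb]⟩
    · obtain ⟨x, hx, hu⟩ := ih ((mem_cons.1 h).resolve_left (Ne.symm hb))
      refine ⟨b :: x, by simp [hx, Ne.symm hb], ?_⟩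
      rw [tailAfter, if_neg hb, cons_append, ← hu]

theorem kEquiv_tailAfter {k : ℕ} {a : α} {u v : List α} (h : kEquiv (k + 1) u v) (hu : a ∈ u)
    (hv : a ∈ v) : kEquiv k (tailAfter a u) (tailAfter a v) := by
  have key : ∀ {p q : List α}, kEquiv (k + 1) p q → a ∈ p → a ∈ q →
      subk k (tailAfter a p) ⊆ subk k (tailAfter a q) := by
    intro p q hpq hp hq w ⟨hlen, hw⟩
    obtain ⟨x, -, hx⟩ := exists_eq_append_cons_tailAfter hp
    obtain ⟨y, hy, hy'⟩ := exists_eq_append_cons_tailAfter hq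
    have haw : a :: w ∈ subk (k + 1) p := by
      refine ⟨by simpa using hlen, ?_⟩
      rw [hx]
      exact hw.cons_cons a |>.trans (sublist_append_right x _)
    rw [hpq] at haw
    exact ⟨hlen, sublist_of_cons_sublist_append_cons (hy' ▸ haw.2) hy⟩
  exact (key h hu hv).antisymm (key h.symm hv hu)

end TailAfter

end Subwords

section Jumps

open Classical in
noncomputable def subkJumps (k : ℕ) (u : List α) : List α → ℕ
  | [] => 0
  | a :: v => (if subk k (u ++ [a]) = subk k u then 0 else 1) + subkJumps k (u ++ [a]) v

theorem subkJumps_append (k : ℕ) (u v v' : List α) :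
    subkJumps k u (v ++ v') = subkJumps k u v + subkJumps k (u ++ v) v' := by
  induction v generalizing u with
  | nil => simp [subkJumps]
  | cons a v ih => simp [subkJumps, ih, Nat.add_assoc]

theorem subkJumps_singleton_le (k : ℕ) (u : List α) (a : α) : subkJumps k u [a] ≤ 1 := by
  simp only [subkJumps]
  split <;> simp

theorem subkJumps_zero (u v : List α) : subkJumps 0 u v = 0 := by
  induction v generalizing u with
  | nil => rfl
  | cons a v ih => simp [subkJumps, subk_zero, ih]

theorem subkJumps_succ_append_le {k : ℕ} {p : List α} :
    ∀ {q v : List α}, (∀ b ∈ q ++ v, b ∈ p) →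
      subkJumps (k + 1) (p ++ q) v ≤ subkJumps k q v
  | _, [], _ => le_rfl
  | q, a :: v, hqv => by
    have hqa : ∀ b ∈ q ++ [a], b ∈ p := fun b hb => hqv b (by simp at hb ⊢; tauto)
    have ih := subkJumps_succ_append_le (k := k) (q := q ++ [a]) (v := v) (by simpa using hqv)
    simp only [subkJumps, ← List.append_assoc] at ih ⊢
    have hstep : (if subk (k + 1) (p ++ q ++ [a]) = subk (k + 1) (p ++ q) then 0 else 1)
        ≤ if subk k (q ++ [a]) = subk k q then 0 else 1 := by
      by_cases h : subk k (q ++ [a]) = subk k q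
      · have := subk_succ_append_left_congr hqa (fun b hb => hqa b (by simp [hb])) h
        simp_all
      · simp only [h, if_false]
        split <;> omega
    omega

theorem length_le_subkJumps {k : ℕ} :
    ∀ {u v : List α},
      (∀ i < v.length, subk k (u ++ v.take (i + 1)) ≠ subk k (u ++ v.take i)) → v.length ≤ subkJumps k u v
  | _, [], _ => le_rfl
  | u, a :: v, h => by
    have ih := length_le_subkJumps (u := u ++ [a]) (v := v) fun i hi => by
      simpa using h (i + 1) (by simpa using hi)
    have ha : subk k (u ++ [a]) ≠ subk k u := by simpa using h 0 (by simp)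
    simp only [subkJumps, length_cons, if_neg ha]
    omega

theorem exists_eq_append_cons_forall_mem {w : List α} (hw : w ≠ []) :
    ∃ p a v, w = p ++ a :: v ∧ a ∉ p ∧ ∀ b ∈ v, b ∈ p ++ [a] := by
  induction w using List.reverseRecOn with
  | nil => exact absurd rfl hw
  | append_singleton w c ih =>
    rcases eq_or_ne w [] with rfl | hne
    · exact ⟨[], c, [], by simp, by simp, by simp⟩
    obtain ⟨p, a, v, rfl, hap, hv⟩ := ih hne
    by_cases hc : c ∈ p ++ [a]
    · refine ⟨p, a, v ++ [c], by simp, hap, fun b hb => ?_⟩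
      rcases mem_append.1 hb with hb | hb
      · exact hv b hb
      · rwa [mem_singleton.1 hb]
    · refine ⟨p ++ a :: v, c, [], by simp, fun hmem => hc ?_, by simp⟩
      rcases mem_append.1 hmem with hmem | hmem
      · exact mem_append_left _ hmem
      · rcases mem_cons.1 hmem with rfl | hmem
        · exact mem_append_right _ (mem_singleton_self c)
        · exact hv c hmem

/-- On `v` the `(k + 1)`-subwords of `p a v` are determined by the `k`-subwords of `v`. -/
theorem subkJumps_append_cons_le {k : ℕ} {p v : List α} {a : α}
    (hv : ∀ b ∈ v, b ∈ p ++ [a]) :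
    subkJumps (k + 1) [] (p ++ a :: v) ≤ subkJumps (k + 1) [] p + 1 + subkJumps k [] v := by
  rw [← singleton_append, ← List.append_assoc, subkJumps_append, subkJumps_append,
    nil_append, nil_append]
  have hjump_a := subkJumps_singleton_le (k + 1) p a
  have hjump_v : subkJumps (k + 1) (p ++ [a]) v ≤ subkJumps k [] v := by
    simpa using subkJumps_succ_append_le (k := k) (p := p ++ [a]) (q := []) (by simpa using hv)
  omega

/-- With `a` the letter whose first occurrence is last, `w = p a v`: `p` avoids `a`, so induction
on the alphabet bounds its jumps, and induction on `k` bounds those of `v`; Pascal's rule adds up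
the bounds. -/
theorem subkJumps_nil_add_one_le_choose [DecidableEq α] :
    ∀ (k : ℕ) (w : List α), subkJumps k [] w + 1 ≤ (w.toFinset.card + k).choose k
  | 0, w => by simp [subkJumps_zero]
  | k + 1, w => by
    rcases eq_or_ne w [] with rfl | hw
    · simp [subkJumps]
    obtain ⟨p, a, v, rfl, hap, hv⟩ := exists_eq_append_cons_forall_mem hw
    have ihp := subkJumps_nil_add_one_le_choose (k + 1) p
    have ihv := subkJumps_nil_add_one_le_choose k v
    have hjumps := subkJumps_append_cons_le (k := k) hv
    set s := (p ++ a :: v).toFinset.card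
    have hps : p.toFinset.card + 1 ≤ s := by
      rw [← Finset.card_insert_of_notMem (by simpa using hap)]
      exact Finset.card_le_card fun c => by simp; tauto
    have hvs : v.toFinset.card ≤ s := Finset.card_le_card fun c => by simp; tauto
    have hp_le : (p.toFinset.card + (k + 1)).choose (k + 1) ≤ (s - 1 + (k + 1)).choose (k + 1) :=
      Nat.choose_le_choose _ (by omega)
    have hv_le : (v.toFinset.card + k).choose k ≤ (s - 1 + (k + 1)).choose k :=
      Nat.choose_le_choose _ (by omega)
    have pascal : (s + (k + 1)).choose (k + 1)
        = (s - 1 + (k + 1)).choose k + (s - 1 + (k + 1)).choose (k + 1) := by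
      rw [← Nat.choose_succ_succ']
      congr 1
      omega
    omega
termination_by k w => (k, w.length)
decreasing_by
  · subst_vars
    exact Prod.Lex.right _ (by simp)
  · exact Prod.Lex.left _ _ (by omega)

end Jumps

section Automata

variable {σ : Type*}

theorem dfaHasSimplePath_iff {A : DFA α σ} {m : ℕ} :
    DFAHasSimplePath A m ↔ ∃ (q : σ) (w : List α), w.length = m ∧
      Function.Injective fun i : Fin (m + 1) => A.evalFrom q (w.take i) := by
  constructor
  · rintro ⟨qs, as, hinj, hstep⟩
    have heval : ∀ (i : ℕ) (hi : i < m + 1),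
        A.evalFrom (qs 0) ((ofFn as).take i) = qs ⟨i, hi⟩ := by
      intro i hi
      induction i with
      | zero => rfl
      | succ i ih =>
        rw [take_add_one, getElem?_eq_getElem (by simp; omega), Option.toList_some,
          DFA.evalFrom_append_singleton, ih (by omega), List.getElem_ofFn]
        exact hstep ⟨i, by omega⟩
    refine ⟨qs 0, ofFn as, length_ofFn, ?_⟩
    convert hinj using 1
    exact funext fun i => heval i i.2
  · rintro ⟨q, w, rfl, hinj⟩
    refine ⟨_, fun i => w[i], hinj, fun i => ?_⟩
    simp only [Fin.val_succ, Fin.val_castSucc]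
    rw [take_add_one, getElem?_eq_getElem i.2, Option.toList_some, DFA.evalFrom_append_singleton]
    rfl

theorem IsMinimalDFA.eval_eq_of_kEquiv {A : DFA α σ} (hmin : IsMinimalDFA A) {k : ℕ}
    (hPT : IsPT k A.accepts) {u v : List α} (h : kEquiv k u v) : A.eval u = A.eval v :=
  hmin.2 _ _ fun x => by
    simpa [DFA.mem_accepts, DFA.eval, DFA.evalFrom_of_append] using hPT _ _ (kEquiv_append h x)

theorem DFAHasSimplePath.add_one_le_choose [Fintype α] {A : DFA α σ}
    (hmin : IsMinimalDFA A) {k : ℕ} (hPT : IsPT k A.accepts) {m : ℕ}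
    (hpath : DFAHasSimplePath A m) : m + 1 ≤ (Fintype.card α + k).choose k := by
  classical
  obtain ⟨q, w, rfl, hinj⟩ := dfaHasSimplePath_iff.1 hpath
  obtain ⟨u, rfl⟩ := hmin.1 q
  have hjumps : ∀ i < w.length, subk k (u ++ w.take (i + 1)) ≠ subk k (u ++ w.take i) := by
    intro i hi h
    have := @hinj ⟨i + 1, by omega⟩ ⟨i, by omega⟩ (by
      simpa [DFA.eval, DFA.evalFrom_of_append] using IsMinimalDFA.eval_eq_of_kEquiv hmin hPT h)
    simp [Fin.ext_iff] at this
  calc w.length + 1 ≤ subkJumps k u w + 1 := by gcongr; exact length_le_subkJumps hjumps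
    _ ≤ subkJumps k [] (u ++ w) + 1 := by simp [subkJumps_append]
    _ ≤ ((u ++ w).toFinset.card + k).choose k := subkJumps_nil_add_one_le_choose k _
    _ ≤ (Fintype.card α + k).choose k :=
      Nat.choose_le_choose k (Nat.add_le_add_right (Finset.card_le_univ _) k)

theorem dfaDepth_le_of_isPT [Fintype α] {A : DFA α σ} (hmin : IsMinimalDFA A)
    {k : ℕ} (hPT : IsPT k A.accepts) : dfaDepth A ≤ (Fintype.card α + k).choose k - 1 :=
  csSup_le' fun m hm => by
    have := DFAHasSimplePath.add_one_le_choose hmin hPT hm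
    omega

theorem le_dfaDepth_of_isPT [Fintype α] {A : DFA α σ} (hmin : IsMinimalDFA A)
    {k : ℕ} (hPT : IsPT k A.accepts) {m : ℕ} (hpath : DFAHasSimplePath A m) :
    m ≤ dfaDepth A :=
  le_csSup ⟨_, fun _ hm => Nat.le_of_succ_le (DFAHasSimplePath.add_one_le_choose hmin hPT hm)⟩
    hpath

theorem dfaHasSimplePath_of_prefixes_distinguished (A : DFA α σ) {w : List α}
    (h : ∀ u v, u <+: v → u ≠ v → v <+: w →
      ∃ x, ¬(u ++ x ∈ A.accepts ↔ v ++ x ∈ A.accepts)) :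
    DFAHasSimplePath A w.length := by
  have key : ∀ i j : Fin (w.length + 1), i < j →
      A.evalFrom A.start (w.take i) ≠ A.evalFrom A.start (w.take j) := by
    intro i j hij heq
    obtain ⟨x, hx⟩ := h (w.take i) (w.take j) ((prefix_take_le_iff (by omega)).2 hij.le)
      (fun h' => by have := congrArg length h'; simp at this; omega)
      (take_prefix _ _)
    exact hx (by simp [DFA.mem_accepts, DFA.eval, DFA.evalFrom_of_append, heq])
  refine dfaHasSimplePath_iff.2 ⟨A.start, w, rfl, fun i j hij => ?_⟩
  rcases lt_trichotomy i j with h' | h' | h'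
  · exact absurd hij (key i j h')
  · exact h'
  · exact absurd hij.symm (key j i h')

end Automata

section LeftQuotient

open Language

theorem Language.toDFA_evalFrom (L : Language α) (s : Set.range L.leftQuotient) (x : List α) :
    (L.toDFA.evalFrom s x).val = s.val.leftQuotient x := by
  induction x generalizing s with
  | nil => rfl
  | cons a x ih =>
    rw [DFA.evalFrom_cons, ih, step_toDFA, ← leftQuotient_append, singleton_append]

theorem Language.isMinimalDFA_toDFA (L : Language α) : IsMinimalDFA L.toDFA := by
  refine ⟨?_, fun p q h => Subtype.ext (Language.ext fun w => ?_)⟩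
  · rintro ⟨_, u, rfl⟩
    exact ⟨u, Subtype.ext (toDFA_evalFrom L _ u)⟩
  · have := h w
    simp only [mem_accept_toDFA, toDFA_evalFrom, mem_leftQuotient, append_nil] at this
    exact this

theorem Language.finite_range_leftQuotient_of_isPT [Finite α] {L : Language α} {k : ℕ}
    (hPT : IsPT k L) : (Set.range L.leftQuotient).Finite := by
  have hfac : Function.FactorsThrough L.leftQuotient (subk k) :=
    fun u v h => Set.ext fun x => hPT _ _ (kEquiv_append h x)
  have hsub : Set.range L.leftQuotient
      ⊆ Function.extend (subk k) L.leftQuotient ⊥ '' Set.range (subk k) := by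
    rintro _ ⟨u, rfl⟩
    exact ⟨_, ⟨u, rfl⟩, hfac.extend_apply _ u⟩
  refine (Set.Finite.image _ ?_).subset hsub
  refine (finite_length_le α k).finite_subsets.subset ?_
  rintro _ ⟨u, rfl⟩ v hv
  exact hv.1

end LeftQuotient

section Extremal

def extremalLang : ℕ → ℕ → List ℕ → Prop
  | 0, _, _ => False
  | 1, m, u => ∀ j < m, j ∈ u
  | _ + 2, 0, _ => False
  | k + 2, m + 1, u =>
    if m ∈ u then extremalLang (k + 1) (m + 1) (tailAfter m u) else extremalLang (k + 2) m u

def extremalWord : ℕ → ℕ → List ℕ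
  | 0, _ => []
  | _ + 1, 0 => []
  | k + 1, m + 1 => extremalWord (k + 1) m ++ m :: extremalWord k (m + 1)

def rangeRep (m : ℕ) : ℕ → List ℕ
  | 0 => []
  | j + 1 => range m ++ rangeRep m j

theorem extremalWord_succ_zero (k : ℕ) : extremalWord (k + 1) 0 = [] := by
  rw [extremalWord]

theorem extremalWord_succ_succ (k m : ℕ) :
    extremalWord (k + 1) (m + 1) = extremalWord (k + 1) m ++ m :: extremalWord k (m + 1) := by
  rw [extremalWord]

theorem extremalLang_one (m : ℕ) (u : List ℕ) : extremalLang 1 m u ↔ ∀ j < m, j ∈ u := by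
  rw [extremalLang]

theorem extremalLang_succ_of_mem {k m : ℕ} {u : List ℕ} (h : m ∈ u) :
    extremalLang (k + 2) (m + 1) u ↔ extremalLang (k + 1) (m + 1) (tailAfter m u) := by
  rw [extremalLang, if_pos h]

theorem extremalLang_succ_of_not_mem {k m : ℕ} {u : List ℕ} (h : m ∉ u) :
    extremalLang (k + 2) (m + 1) u ↔ extremalLang (k + 2) m u := by
  rw [extremalLang, if_neg h]

theorem extremalLang_append_cons {k m : ℕ} {x : List ℕ} (hx : m ∉ x) (y : List ℕ) :
    extremalLang (k + 2) (m + 1) (x ++ m :: y) ↔ extremalLang (k + 1) (m + 1) y := by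
  rw [extremalLang_succ_of_mem (by simp), tailAfter_append_cons_of_not_mem hx]

theorem extremalLang_congr : ∀ (k m : ℕ) {u v : List ℕ}, kEquiv k u v →
    (extremalLang k m u ↔ extremalLang k m v)
  | 0, _, _, _, _ => by simp [extremalLang]
  | 1, m, u, v, h => by
    simp only [extremalLang_one, kEquiv_mem le_rfl h]
  | _ + 2, 0, _, _, _ => by simp [extremalLang]
  | k + 2, m + 1, u, v, h => by
    by_cases hm : m ∈ u
    · have hmv : m ∈ v := (kEquiv_mem (by omega) h m).1 hm
      rw [extremalLang_succ_of_mem hm, extremalLang_succ_of_mem hmv]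
      exact extremalLang_congr (k + 1) (m + 1) (kEquiv_tailAfter h hm hmv)
    · have hmv : m ∉ v := by rwa [← kEquiv_mem (by omega) h m]
      rw [extremalLang_succ_of_not_mem hm, extremalLang_succ_of_not_mem hmv]
      exact extremalLang_congr (k + 2) m h

theorem lt_of_mem_extremalWord : ∀ {k m c : ℕ}, c ∈ extremalWord k m → c < m
  | 0, _, _, h => by simp [extremalWord] at h
  | _ + 1, 0, _, h => by simp [extremalWord_succ_zero] at h
  | k + 1, m + 1, c, h => by
    rw [extremalWord_succ_succ, mem_append, mem_cons] at h
    rcases h with h | rfl | h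
    · exact (lt_of_mem_extremalWord h).trans (Nat.lt_succ_self m)
    · exact Nat.lt_succ_self _
    · exact lt_of_mem_extremalWord h

theorem length_extremalWord_add_one : ∀ k m, (extremalWord k m).length + 1 = (k + m).choose k
  | 0, _ => by simp [extremalWord]
  | _ + 1, 0 => by simp [extremalWord_succ_zero]
  | k + 1, m + 1 => by
    have h₁ := length_extremalWord_add_one (k + 1) m
    have h₂ := length_extremalWord_add_one k (m + 1)
    rw [show k + (m + 1) = k + 1 + m by omega] at h₂
    rw [extremalWord_succ_succ, length_append, length_cons,
      show k + 1 + (m + 1) = k + 1 + m + 1 by omega, Nat.choose_succ_succ']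
    omega

theorem extremalWord_one (m : ℕ) : extremalWord 1 m = range m := by
  induction m with
  | zero => rw [extremalWord_succ_zero, range_zero]
  | succ m ih => rw [extremalWord_succ_succ, ih, range_succ, extremalWord]

theorem lt_of_mem_rangeRep {m j c : ℕ} (h : c ∈ rangeRep m j) : c < m := by
  induction j with
  | zero => simp [rangeRep] at h
  | succ j ih =>
    rcases mem_append.1 h with h | h
    · exact mem_range.1 h
    · exact ih h

theorem rangeRep_succ_succ (m j : ℕ) :
    rangeRep (m + 1) (j + 1) = range m ++ m :: rangeRep (m + 1) j := by
  simp [rangeRep, range_succ]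

theorem not_extremalLang_rangeRep (k m : ℕ) :
    ¬ extremalLang (k + 1) (m + 1) (rangeRep (m + 1) k) := by
  induction k with
  | zero => simpa [extremalLang_one, rangeRep] using ⟨0, Nat.zero_le m⟩
  | succ k ih =>
    rwa [rangeRep_succ_succ, extremalLang_append_cons (by simp)]

theorem extremalLang_append_rangeRep (k m : ℕ) (v : List ℕ) :
    extremalLang (k + 1) (m + 1) (v ++ rangeRep (m + 1) (k + 1)) := by
  induction k generalizing v with
  | zero =>
    rw [extremalLang_one]
    intro j hj
    simp [rangeRep, hj]
  | succ k ih =>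
    by_cases hv : m ∈ v
    · rw [extremalLang_succ_of_mem (mem_append_left _ hv), tailAfter_append_of_mem hv,
        rangeRep, ← List.append_assoc]
      exact ih _
    · rw [rangeRep_succ_succ, ← List.append_assoc, extremalLang_append_cons (by simp [hv])]
      simpa using ih []

/-- The key case is `u` a prefix of `extremalWord (k + 2) m` while `v` has passed the letter `m`:
the suffix `(0 1 ⋯ m) ^ (k + 1)` is accepted after `v`, which has already descended one level,
but not after `u`. -/
theorem exists_suffix_not_extremalLang_iff : ∀ (k m : ℕ) {u v : List ℕ}, u <+: v → u ≠ v →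
    v <+: extremalWord k m →
      ∃ x, (∀ c ∈ x, c < m) ∧ ¬(extremalLang k m (u ++ x) ↔ extremalLang k m (v ++ x))
  | 0, _, u, v, huv, hne, hv => by
    rw [extremalWord, prefix_nil] at hv
    subst hv
    exact absurd (prefix_nil.1 huv) hne
  | 1, m, u, v, huv, hne, hv => by
    rw [extremalWord_one] at hv
    have hrange : ∀ w : List ℕ, w <+: range m → ∃ i ≤ m, w = range i := fun w hw =>
      ⟨w.length, by simpa using hw.length_le,
        by rw [prefix_iff_eq_take.1 hw, take_range, length_range]⟩
    obtain ⟨j, hjm, rfl⟩ := hrange v hv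
    obtain ⟨i, -, rfl⟩ := hrange u (huv.trans hv)
    have hij : i < j := by
      have := huv.length_le
      simp only [length_range] at this
      exact lt_of_le_of_ne this (by rintro rfl; exact hne rfl)
    refine ⟨(range m).erase i, fun c hc => mem_range.1 (erase_subset hc), ?_⟩
    rw [extremalLang_one, extremalLang_one]
    have hi_out : i ∉ range i ++ (range m).erase i := by simp [nodup_range.mem_erase_iff]
    have hj_in : ∀ c < m, c ∈ range j ++ (range m).erase i := fun c hc => by
      rcases eq_or_ne c i with rfl | hci
      · exact mem_append_left _ (mem_range.2 hij)
      · exact mem_append_right _ (nodup_range.mem_erase_iff.2 ⟨hci, mem_range.2 hc⟩)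
    exact fun h => hi_out (h.2 hj_in i (hij.trans_le hjm))
  | _ + 2, 0, u, v, huv, hne, hv => by
    rw [extremalWord_succ_zero, prefix_nil] at hv
    subst hv
    exact absurd (prefix_nil.1 huv) hne
  | k + 2, m + 1, u, v, huv, hne, hv => by
    have hW₁ : ∀ c ∈ extremalWord (k + 2) m, c < m := fun c hc => lt_of_mem_extremalWord hc
    have hmW₁ : m ∉ extremalWord (k + 2) m := fun h => Nat.lt_irrefl m (hW₁ m h)
    rw [extremalWord_succ_succ] at hv
    rcases prefix_append_cons_cases hv with hv₁ | ⟨t, ht, rfl⟩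
    · obtain ⟨x, hx, hux⟩ := exists_suffix_not_extremalLang_iff (k + 2) m huv hne hv₁
      have hm : ∀ w : List ℕ, w <+: extremalWord (k + 2) m → m ∉ w ++ x := by
        intro w hw hmem
        rcases mem_append.1 hmem with h | h
        · exact hmW₁ (hw.subset h)
        · exact Nat.lt_irrefl m (hx m h)
      refine ⟨x, fun c hc => Nat.lt_succ_of_lt (hx c hc), ?_⟩
      rwa [extremalLang_succ_of_not_mem (hm u (huv.trans hv₁)),
        extremalLang_succ_of_not_mem (hm v hv₁)]
    rcases prefix_append_cons_cases huv with hu₁ | ⟨s, hs, rfl⟩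
    · refine ⟨rangeRep (m + 1) (k + 1), fun c hc => lt_of_mem_rangeRep hc, ?_⟩
      have hu : ¬ extremalLang (k + 2) (m + 1) (u ++ rangeRep (m + 1) (k + 1)) := by
        rw [rangeRep_succ_succ, ← List.append_assoc, extremalLang_append_cons]
        · exact not_extremalLang_rangeRep k m
        · simp only [mem_append, mem_range, Nat.lt_irrefl, or_false]
          exact fun h => hmW₁ (hu₁.subset h)
      rw [List.append_assoc, cons_append, extremalLang_append_cons hmW₁]
      exact fun h => hu (h.2 (extremalLang_append_rangeRep k m _))
    · obtain ⟨x, hx, hsx⟩ := exists_suffix_not_extremalLang_iff (k + 1) (m + 1)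
        hs (by rintro rfl; exact hne rfl) ht
      refine ⟨x, hx, ?_⟩
      rwa [List.append_assoc, List.append_assoc, cons_append, cons_append,
        extremalLang_append_cons hmW₁, extremalLang_append_cons hmW₁]

def extremalLangFin (k n : ℕ) : Language (Fin n) :=
  {u | extremalLang k n (u.map Fin.val)}

theorem isPT_extremalLangFin (k n : ℕ) : IsPT k (extremalLangFin k n) :=
  fun _ _ h => extremalLang_congr k n (kEquiv_map Fin.val h)

theorem dfaHasSimplePath_toDFA_extremalLangFin (k n : ℕ) :
    DFAHasSimplePath (extremalLangFin k n).toDFA (extremalWord k n).length := by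
  obtain ⟨w, hw⟩ : ∃ w : List (Fin n), w.map Fin.val = extremalWord k n :=
    CanLift.prf _ fun c hc => lt_of_mem_extremalWord hc
  rw [← hw, length_map]
  refine dfaHasSimplePath_of_prefixes_distinguished _ fun u v huv hne hv => ?_
  obtain ⟨x, hx, hux⟩ := exists_suffix_not_extremalLang_iff k n (huv.map Fin.val)
    (fun h => hne (map_injective_iff.2 Fin.val_injective h)) (hw ▸ hv.map Fin.val)
  lift x to List (Fin n) using hx
  refine ⟨x, ?_⟩
  rw [Language.accepts_toDFA]
  change ¬(extremalLang k n ((u ++ x).map Fin.val) ↔ extremalLang k n ((v ++ x).map Fin.val))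
  rwa [map_append, map_append]

end Extremal

end Development

theorem stmt18_general (k n : ℕ) :
    (∀ (α : Type) [Fintype α], Fintype.card α = n → ∀ L : Language α, IsPT k L →
      ∃ (τ : Type) (_ : Fintype τ) (D : DFA α τ),
        IsMinimalDFA D ∧ D.accepts = L ∧ dfaDepth D ≤ Nat.choose (k + n) k - 1) ∧
    (∃ (α : Type) (instα : Fintype α) (L : Language α),
      @Fintype.card α instα = n ∧ IsPT k L ∧
      ∃ (τ : Type) (_ : Fintype τ) (D : DFA α τ),
        IsMinimalDFA D ∧ D.accepts = L ∧ dfaDepth D = Nat.choose (k + n) k - 1) := by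
  refine ⟨fun α _ hcard L hPT => ?_, ?_⟩
  · have := (L.finite_range_leftQuotient_of_isPT hPT).fintype
    refine ⟨_, this, L.toDFA, L.isMinimalDFA_toDFA, L.accepts_toDFA, ?_⟩
    rw [add_comm, ← hcard]
    exact dfaDepth_le_of_isPT L.isMinimalDFA_toDFA (by rwa [Language.accepts_toDFA])
  · set L := extremalLangFin k n
    have hPT : IsPT k L.toDFA.accepts := by
      rw [Language.accepts_toDFA]
      exact isPT_extremalLangFin k n
    have hle := dfaDepth_le_of_isPT L.isMinimalDFA_toDFA hPT
    have hge := le_dfaDepth_of_isPT L.isMinimalDFA_toDFA hPT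
      (dfaHasSimplePath_toDFA_extremalLangFin k n)
    have hlen := length_extremalWord_add_one k n
    rw [Fintype.card_fin, add_comm] at hle
    refine ⟨Fin n, inferInstance, L, Fintype.card_fin n, isPT_extremalLangFin k n, _,
      (L.finite_range_leftQuotient_of_isPT (isPT_extremalLangFin k n)).fintype, L.toDFA,
      L.isMinimalDFA_toDFA, L.accepts_toDFA, by omega⟩

/-- Tight bound on the depth of minimal DFAs of `k`-PT languages over `n`-letter
alphabets: (i) every such language has a minimal DFA of depth at most `C(k+n,k)-1`;
(ii) the bound is attained. -/
theorem stmt18 (k n : ℕ) (hk : 1 ≤ k) (hn : 1 ≤ n) :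
    (∀ (α : Type) [Fintype α], Fintype.card α = n → ∀ L : Language α, IsPT k L →
      ∃ (τ : Type) (_ : Fintype τ) (D : DFA α τ),
        IsMinimalDFA D ∧ D.accepts = L ∧ dfaDepth D ≤ Nat.choose (k + n) k - 1) ∧
    (∃ (α : Type) (instα : Fintype α) (L : Language α),
      @Fintype.card α instα = n ∧ IsPT k L ∧
      ∃ (τ : Type) (_ : Fintype τ) (D : DFA α τ),
        IsMinimalDFA D ∧ D.accepts = L ∧ dfaDepth D = Nat.choose (k + n) k - 1) :=
  stmt18_general k n
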